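/- arXiv:2507.00244 — 2 statements merged into one kernel-verified Lean document; each statement's English description precedes it below -/
import Mathlib

section
/- The composition of a fission followed by a fusion need not return the original morphological tree: there exists a morphological tree S with root bundle B_v, a subset A ⊆ B_v, and a partition B_v \ A = B₁ ⊔ B₂ such that the graft M^morph(S_{B₁∪A}, S_{B₂∪A}) of the two fissioned trees is not equal to S. -/
/-- Morphological trees with `F`-labeled leaves. -/
inductive MTree (F : Type) : Type
  | leaf : F → MTree F
  | node : MTree F → MTree F → MTree F
  deriving DecidableEq

def MTree.bundle {F : Type} [DecidableEq F] : MTree F → Finset F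
  | .leaf μ => {μ}
  | .node l r => l.bundle ∪ r.bundle

/-- Restriction of a morphological tree to a feature set `C`: intersect every
vertex bundle with `C`, delete maximal subtrees whose bundle becomes empty, and
contract the resulting trivial non-branching vertices.  Returns `none` if the
whole tree is deleted.  `restrict S (Bᵢ ∪ A)` is the fissioned tree
`S_{Bᵢ∪A}`. -/
def MTree.restrict {F : Type} [DecidableEq F] :
    MTree F → Finset F → Option (MTree F)
  | .leaf μ, C => if μ ∈ C then some (.leaf μ) else none
  | .node l r, C =>
    match l.restrict C, r.restrict C with
    | some l', some r' => some (.node l' r')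
    | some l', none => some l'
    | none, o => o

/-- The composition of a fission followed by a fusion need not return the
original morphological tree: there exist a morphological tree `S` with root
bundle `B_v`, a subset `A ⊆ B_v` and a partition `B_v \ A = B₁ ⊔ B₂` such that
the graft `M^morph(S_{B₁∪A}, S_{B₂∪A})` of the two fissioned trees is not equal
to `S` (in either order of the unordered graft). -/
theorem fission_then_fusion_not_identity :
    ∃ (S : MTree (Fin 4)) (A B₁ B₂ : Finset (Fin 4))
      (S₁ S₂ : MTree (Fin 4)),
      A ⊆ S.bundle ∧
      Disjoint B₁ B₂ ∧
      B₁ ∪ B₂ = S.bundle \ A ∧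
      S.restrict (B₁ ∪ A) = some S₁ ∧
      S.restrict (B₂ ∪ A) = some S₂ ∧
      MTree.node S₁ S₂ ≠ S ∧ MTree.node S₂ S₁ ≠ S := by
  -- Example 5.6 with φ, α, β, γ = 0, 1, 2, 3: restricting to {φ, γ} collapses both children of the
  -- root to leaves, so the fused tree has M(φ, γ) as a child, which S does not.
  refine ⟨.node (.node (.leaf 0) (.leaf 1)) (.node (.leaf 2) (.leaf 3)), {0}, {3}, {1, 2},
    .node (.leaf 0) (.leaf 3), .node (.node (.leaf 0) (.leaf 1)) (.leaf 2),
    by decide, by decide, by decide, rfl, rfl, ?_, ?_⟩ <;>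
  simp
end

section
/- Syntactic objects with head functions form a colored operad with color set SO₀: defining the color of the root of (T, h_T) to be the label α_{h_T(r)} at the head leaf and the color of each leaf ℓ its label α_ℓ, the insertion of (T′, h_{T′}) at a leaf ℓ of (T, h_T) is defined exactly when the root color of T′ equals the leaf color α_ℓ, and these color-matching insertions satisfy the colored operad associativity and unit axioms. -/
/-!
Every identity is proved by induction on the outer tree: grafting at position `i` into
`node b l r` descends into `l` or into `r` (with `i` shifted by `|l|`), so each case reduces
to the same identity on a subtree after leaf-count arithmetic. The output color survives
because the head path of `T` either avoids the grafting leaf or ends at it, where the colors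
match. The associativity case `i ≥ j + |Y|` is the case `i < j` with `Y` and `Z` exchanged.
-/

/-- Syntactic objects endowed with a head function: at each internal vertex,
the Boolean records which of the two children projects (`false` = left child
is the head, `true` = right child is the head).  This encodes exactly the
coherence condition that the head of a vertex is the head of exactly one of
its children. -/
inductive HTree (X : Type) : Type
  | leaf : X → HTree X
  | node : Bool → HTree X → HTree X → HTree X

def HTree.numLeaves {X : Type} : HTree X → ℕ
  | .leaf _ => 1
  | .node _ l r => l.numLeaves + r.numLeaves

/-- The label of the `i`-th leaf (0-indexed): the color of the `i`-th input. -/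
def HTree.labelAt {X : Type} : HTree X → ℕ → X
  | .leaf x, _ => x
  | .node _ l r, i =>
    if i < l.numLeaves then l.labelAt i else r.labelAt (i - l.numLeaves)

/-- The label induced at the root by the head function (the labeling
algorithm): the color of the output. -/
def HTree.headLabel {X : Type} : HTree X → X
  | .leaf x => x
  | .node b l r => if b then r.headLabel else l.headLabel

/-- Grafting the root of `T'` onto the `i`-th leaf of `T` (color-matching
insertion of the colored operad, total on underlying data). -/
def HTree.graftAt {X : Type} : HTree X → ℕ → HTree X → HTree X
  | .leaf _, 0, T' => T'
  | .leaf x, _ + 1, _ => .leaf x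
  | .node b l r, i, T' =>
    if i < l.numLeaves then .node b (l.graftAt i T') r
    else .node b l (r.graftAt (i - l.numLeaves) T')

namespace HTree

variable {X : Type}

theorem numLeaves_pos (T : HTree X) : 0 < T.numLeaves := by
  induction T with
  | leaf x => simp [numLeaves]
  | node b l r ihl ihr => simp only [numLeaves]; omega

theorem eq_zero_of_lt_numLeaves_leaf {x : X} {i : ℕ} (h : i < (leaf x).numLeaves) : i = 0 := by
  simp only [numLeaves] at h; omega

theorem labelAt_node_of_lt {b : Bool} {l r : HTree X} {i : ℕ} (h : i < l.numLeaves) :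
    (node b l r).labelAt i = l.labelAt i := by
  rw [labelAt, if_pos h]

theorem labelAt_node_of_le {b : Bool} {l r : HTree X} {i : ℕ} (h : l.numLeaves ≤ i) :
    (node b l r).labelAt i = r.labelAt (i - l.numLeaves) := by
  rw [labelAt, if_neg (Nat.not_lt.mpr h)]

theorem graftAt_node_of_lt {b : Bool} {l r : HTree X} {i : ℕ} (T' : HTree X)
    (h : i < l.numLeaves) : (node b l r).graftAt i T' = node b (l.graftAt i T') r := by
  rw [graftAt, if_pos h]

theorem graftAt_node_of_le {b : Bool} {l r : HTree X} {i : ℕ} (T' : HTree X)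
    (h : l.numLeaves ≤ i) :
    (node b l r).graftAt i T' = node b l (r.graftAt (i - l.numLeaves) T') := by
  rw [graftAt, if_neg (Nat.not_lt.mpr h)]

theorem numLeaves_graftAt (T T' : HTree X) {i : ℕ} (h : i < T.numLeaves) :
    (T.graftAt i T').numLeaves = T.numLeaves + T'.numLeaves - 1 := by
  induction T generalizing i with
  | leaf x =>
    obtain rfl := eq_zero_of_lt_numLeaves_leaf h
    simp [graftAt, numLeaves]
  | node b l r ihl ihr =>
    simp only [numLeaves] at h ⊢
    have := T'.numLeaves_pos
    rcases Nat.lt_or_ge i l.numLeaves with hi | hi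
    · rw [graftAt_node_of_lt _ hi, numLeaves, ihl hi]; omega
    · rw [graftAt_node_of_le _ hi, numLeaves, ihr (by omega)]; omega

theorem headLabel_graftAt {T T' : HTree X} {i : ℕ} (h : i < T.numLeaves)
    (hc : T'.headLabel = T.labelAt i) : (T.graftAt i T').headLabel = T.headLabel := by
  induction T generalizing i with
  | leaf x =>
    obtain rfl := eq_zero_of_lt_numLeaves_leaf h
    exact hc
  | node b l r ihl ihr =>
    simp only [numLeaves] at h
    rcases Nat.lt_or_ge i l.numLeaves with hi | hi
    · rw [labelAt_node_of_lt hi] at hc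
      rw [graftAt_node_of_lt _ hi]
      cases b <;> simp [headLabel, ihl hi hc]
    · rw [labelAt_node_of_le hi] at hc
      rw [graftAt_node_of_le _ hi]
      cases b <;> simp [headLabel, ihr (by omega) hc]

theorem graftAt_leaf_labelAt (T : HTree X) {i : ℕ} (h : i < T.numLeaves) :
    T.graftAt i (leaf (T.labelAt i)) = T := by
  induction T generalizing i with
  | leaf x =>
    obtain rfl := eq_zero_of_lt_numLeaves_leaf h
    rfl
  | node b l r ihl ihr =>
    simp only [numLeaves] at h
    rcases Nat.lt_or_ge i l.numLeaves with hi | hi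
    · rw [labelAt_node_of_lt hi, graftAt_node_of_lt _ hi, ihl hi]
    · rw [labelAt_node_of_le hi, graftAt_node_of_le _ hi, ihr (by omega)]

theorem graftAt_graftAt_of_lt (T Y Z : HTree X) {i j : ℕ} (hij : i < j)
    (hj : j < T.numLeaves) :
    (T.graftAt j Y).graftAt i Z = (T.graftAt i Z).graftAt (j + Z.numLeaves - 1) Y := by
  induction T generalizing i j with
  | leaf x => exact absurd (eq_zero_of_lt_numLeaves_leaf hj) (by omega)
  | node b l r ihl ihr =>
    simp only [numLeaves] at hj
    have := Z.numLeaves_pos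
    rcases Nat.lt_or_ge j l.numLeaves with hjl | hjl
    · have hil : i < l.numLeaves := by omega
      have hl' := numLeaves_graftAt l Y hjl
      have hl'' := numLeaves_graftAt l Z hil
      rw [graftAt_node_of_lt _ hjl, graftAt_node_of_lt _ (by omega), graftAt_node_of_lt _ hil,
        graftAt_node_of_lt _ (by omega), ihl hij hjl]
    rcases Nat.lt_or_ge i l.numLeaves with hil | hil
    · have hl' := numLeaves_graftAt l Z hil
      rw [graftAt_node_of_le _ hjl, graftAt_node_of_lt _ hil, graftAt_node_of_lt _ hil,
        graftAt_node_of_le _ (by omega), hl',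
        show j + Z.numLeaves - 1 - (l.numLeaves + Z.numLeaves - 1) = j - l.numLeaves by omega]
    · rw [graftAt_node_of_le _ hjl, graftAt_node_of_le _ hil, graftAt_node_of_le _ hil,
        graftAt_node_of_le _ (by omega), ihr (by omega) (by omega),
        show j - l.numLeaves + Z.numLeaves - 1 = j + Z.numLeaves - 1 - l.numLeaves by omega]

theorem graftAt_graftAt_of_le_of_lt (T Y Z : HTree X) {i j : ℕ} (hji : j ≤ i)
    (hiY : i < j + Y.numLeaves) (hj : j < T.numLeaves) :
    (T.graftAt j Y).graftAt i Z = T.graftAt j (Y.graftAt (i - j) Z) := by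
  induction T generalizing i j with
  | leaf x =>
    obtain rfl := eq_zero_of_lt_numLeaves_leaf hj
    rfl
  | node b l r ihl ihr =>
    simp only [numLeaves] at hj
    rcases Nat.lt_or_ge j l.numLeaves with hjl | hjl
    · have hl' := numLeaves_graftAt l Y hjl
      rw [graftAt_node_of_lt _ hjl, graftAt_node_of_lt _ (by omega), graftAt_node_of_lt _ hjl,
        ihl hji hiY hjl]
    · rw [graftAt_node_of_le _ hjl, graftAt_node_of_le _ (by omega), graftAt_node_of_le _ hjl,
        ihr (by omega) (by omega) (by omega),
        show i - l.numLeaves - (j - l.numLeaves) = i - j by omega]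

theorem graftAt_graftAt_of_add_le (T Y Z : HTree X) {i j : ℕ} (hi : j + Y.numLeaves ≤ i)
    (hiT : i < T.numLeaves + Y.numLeaves - 1) :
    (T.graftAt j Y).graftAt i Z = (T.graftAt (i - Y.numLeaves + 1) Z).graftAt j Y := by
  have := Y.numLeaves_pos
  rw [graftAt_graftAt_of_lt T Z Y (by omega) (by omega),
    show i - Y.numLeaves + 1 + Y.numLeaves - 1 = i by omega]

end HTree

/-- Syntactic objects with head functions form a colored operad with color set
`SO₀`: the output color of `(T, h_T)` is the label at the head leaf, the input
colors are the leaf labels, insertion at a leaf is performed when the root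
color of the inserted tree matches the leaf color, and these color-matching
insertions satisfy the colored operad unit and associativity axioms (and
preserve the output color and the grading). -/
theorem headed_syntactic_objects_colored_operad (X : Type) :
    -- colors are preserved: output color and arity of a color-matching insertion
    (∀ (T T' : HTree X) (i : ℕ), i < T.numLeaves →
      T'.headLabel = T.labelAt i →
      (T.graftAt i T').headLabel = T.headLabel ∧
      (T.graftAt i T').numLeaves = T.numLeaves + T'.numLeaves - 1) ∧
    -- left unit: the single-leaf tree of color c is a left unit (colors match)
    (∀ (T' : HTree X) (c : X), T'.headLabel = c →
      (HTree.leaf c).graftAt 0 T' = T') ∧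
    -- right unit: inserting the unit of the matching color changes nothing
    (∀ (T : HTree X) (i : ℕ), i < T.numLeaves →
      T.graftAt i (HTree.leaf (T.labelAt i)) = T) ∧
    -- associativity, parallel case i < j (with color matching)
    (∀ (T Y Z : HTree X) (i j : ℕ), i < j → j < T.numLeaves →
      Y.headLabel = T.labelAt j → Z.headLabel = T.labelAt i →
      (T.graftAt j Y).graftAt i Z =
        (T.graftAt i Z).graftAt (j + Z.numLeaves - 1) Y) ∧
    -- associativity, nested case j ≤ i < j + |Y| (with color matching)
    (∀ (T Y Z : HTree X) (i j : ℕ), j ≤ i → i < j + Y.numLeaves →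
      j < T.numLeaves →
      Y.headLabel = T.labelAt j → Z.headLabel = Y.labelAt (i - j) →
      (T.graftAt j Y).graftAt i Z = T.graftAt j (Y.graftAt (i - j) Z)) ∧
    -- associativity, parallel case i ≥ j + |Y| (with color matching)
    (∀ (T Y Z : HTree X) (i j : ℕ), j + Y.numLeaves ≤ i →
      i < T.numLeaves + Y.numLeaves - 1 → j < T.numLeaves →
      Y.headLabel = T.labelAt j →
      Z.headLabel = T.labelAt (i - Y.numLeaves + 1) →
      (T.graftAt j Y).graftAt i Z =
        (T.graftAt (i - Y.numLeaves + 1) Z).graftAt j Y) := by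
  refine ⟨fun T T' i h hc => ⟨HTree.headLabel_graftAt h hc, T.numLeaves_graftAt T' h⟩,
    fun T' c _ => rfl,
    fun T i h => T.graftAt_leaf_labelAt h,
    fun T Y Z i j hij hj _ _ => T.graftAt_graftAt_of_lt Y Z hij hj,
    fun T Y Z i j hji hiY hj _ _ => T.graftAt_graftAt_of_le_of_lt Y Z hji hiY hj,
    fun T Y Z i j hi hiT _ _ _ => T.graftAt_graftAt_of_add_le Y Z hi hiT⟩
end
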